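/- arXiv:2210.02281 — 5 statements merged into one kernel-verified Lean document; each statement's English description precedes it below -/
import Mathlib

section
/- Let φ : ℝ^d → ℝ be continuous, positive, and bounded, with a point x₀ such that φ(x₀+y) = φ(x₀−y) for all y, and suppose φ(x₀+z) < φ(x₀) for some z ≠ 0. Then there exist T > 0 and y* ≠ 0 such that both y* and −y* minimize the function y ↦ |y|²/(2T) + φ(x₀+y)·φ(x₀+y*) over ℝ^d. In particular the minimizer is not unique. -/
theorem stmt_3 (d : ℕ) (φ : EuclideanSpace ℝ (Fin d) → ℝ)
    (hcont : Continuous φ) (hpos : ∀ x, 0 < φ x) (hbdd : ∃ C, ∀ x, φ x ≤ C)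
    (x₀ : EuclideanSpace ℝ (Fin d))
    (hsym : ∀ y, φ (x₀ + y) = φ (x₀ - y))
    (z : EuclideanSpace ℝ (Fin d)) (hz : z ≠ 0) (hzlt : φ (x₀ + z) < φ x₀) :
    ∃ T > (0:ℝ), ∃ ystar : EuclideanSpace ℝ (Fin d), ystar ≠ 0 ∧
      (∀ y, ‖ystar‖^2 / (2*T) + φ (x₀ + ystar) * φ (x₀ + ystar)
          ≤ ‖y‖^2 / (2*T) + φ (x₀ + y) * φ (x₀ + ystar)) ∧
      (∀ y, ‖-ystar‖^2 / (2*T) + φ (x₀ + -ystar) * φ (x₀ + ystar)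
          ≤ ‖y‖^2 / (2*T) + φ (x₀ + y) * φ (x₀ + ystar)) := by
  have hgap : 0 < φ x₀ - φ (x₀ + z) := by linarith
  have hznorm : (0:ℝ) < ‖z‖ := norm_pos_iff.mpr hz
  set S : ℝ := ‖z‖^2 / (φ x₀ - φ (x₀ + z)) with hS
  have hSpos : 0 < S := by positivity
  set H : EuclideanSpace ℝ (Fin d) → ℝ := fun y => ‖y‖^2 / (2*S) + φ (x₀ + y) with hH
  have hHcont : Continuous H := by
    exact ((continuous_norm.pow 2).div_const _).add
      (hcont.comp (continuous_const.add continuous_id))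
  have hcoer : Filter.Tendsto H (Filter.cocompact _) Filter.atTop := by
    have hn : Filter.Tendsto (fun y : EuclideanSpace ℝ (Fin d) => ‖y‖)
        (Filter.cocompact _) Filter.atTop := tendsto_norm_cocompact_atTop
    have hp : Filter.Tendsto (fun t : ℝ => t^2 / (2*S)) Filter.atTop Filter.atTop :=
      (Filter.tendsto_pow_atTop (by norm_num)).atTop_div_const (by positivity)
    refine Filter.tendsto_atTop_mono (fun y => ?_) (hp.comp hn)
    have := (hpos (x₀ + y)).le
    simp only [hH, Function.comp]
    linarith
  obtain ⟨ystar, hmin⟩ := hHcont.exists_forall_le' (x₀ := 0)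
    (hcoer.eventually_ge_atTop (H 0))
  have hH0 : H 0 = φ x₀ := by simp [hH]
  have hHz : H z < H 0 := by
    have hval : ‖z‖^2 / (2*S) = (φ x₀ - φ (x₀ + z)) / 2 := by
      rw [hS]; field_simp
    simp only [hH]
    rw [hval]
    simp only [norm_zero, add_zero]
    norm_num
    linarith
  have hystar : ystar ≠ 0 := by
    intro h
    have := hmin z
    rw [h] at this
    linarith
  set K : ℝ := φ (x₀ + ystar) with hK
  have hKpos : 0 < K := hpos _
  refine ⟨S / K, by positivity, ystar, hystar, ?_, ?_⟩
  · intro y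
    have h := mul_le_mul_of_nonneg_left (hmin y) hKpos.le
    simp only [hH] at h
    have e1 : ‖ystar‖^2 / (2*(S/K)) = K * (‖ystar‖^2 / (2*S)) := by
      field_simp
    have e2 : ‖y‖^2 / (2*(S/K)) = K * (‖y‖^2 / (2*S)) := by
      field_simp
    rw [e1, e2]
    nlinarith [h]
  · intro y
    have hsy : φ (x₀ + -ystar) = K := by
      rw [← sub_eq_add_neg, ← hsym]
    have h := mul_le_mul_of_nonneg_left (hmin y) hKpos.le
    simp only [hH] at h
    have e1 : ‖-ystar‖^2 / (2*(S/K)) = K * (‖ystar‖^2 / (2*S)) := by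
      rw [norm_neg]; field_simp
    have e2 : ‖y‖^2 / (2*(S/K)) = K * (‖y‖^2 / (2*S)) := by
      field_simp
    rw [e1, e2, hsy]
    nlinarith [h]
end

section
/- Let b ∈ (0,1) with b ≠ 1/2, and for x ∈ ℝ let μ₁ = b·δ_x + (1−b)·δ_{(1−bx)/(1−b)} (a convex combination of Dirac masses on ℝ). Then ∫ v dμ₁(v) = 1, and the map x ↦ ∫ (4v³ + 6v²) dμ₁(v) is a cubic polynomial in x with leading coefficient 4b(1−2b)/(1−b)²; consequently the quantity ∫(4v³+6v²) dμ₁(v) + 4 takes both strictly positive and strictly negative values as x ranges over ℝ. -/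
/-! The second point `(1 - b x)/(1 - b)` is chosen so that `μ₁` has mean `1`. Expanding the
moment `∫ (4v³ + 6v²) dμ₁` in `x` gives a cubic whose leading coefficient
`4b - 4b³/(1 - b)² = 4b(1 - 2b)/(1 - b)²` vanishes only at `b = 1/2`; a real cubic with nonzero
leading coefficient tends to `+∞` at one end of the line and to `-∞` at the other, so adding the
constant `4` cannot prevent it from taking both signs. -/

open Polynomial Filter

theorem exists_pos_cubic {a : ℝ} (ha : 0 < a) (c₂ c₁ c₀ : ℝ) :
    ∃ x : ℝ, 0 < a * x ^ 3 + c₂ * x ^ 2 + c₁ * x + c₀ := by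
  set P : ℝ[X] := C a * X ^ 3 + C c₂ * X ^ 2 + C c₁ * X + C c₀ with hP
  have hdeg : P.degree = 3 := by
    rw [hP]; compute_degree!; exact ha.ne'
  have hlc : P.leadingCoeff = a := by
    rw [leadingCoeff, natDegree_eq_of_degree_eq_some hdeg, hP]
    simp
  have hP_top : Tendsto (fun x => P.eval x) atTop atTop :=
    P.tendsto_atTop_of_leadingCoeff_nonneg (by rw [hdeg]; norm_num) (hlc ▸ ha.le)
  obtain ⟨x, hx⟩ := (hP_top.eventually_gt_atTop 0).exists
  exact ⟨x, by simpa [hP] using hx⟩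

/-- `p(x) ↦ -p(-x)` keeps the leading coefficient and `p ↦ -p` negates it, so each case reduces
to `exists_pos_cubic`. -/
theorem cubic_takes_both_signs {a : ℝ} (ha : a ≠ 0) (c₂ c₁ c₀ : ℝ) :
    (∃ x : ℝ, 0 < a * x ^ 3 + c₂ * x ^ 2 + c₁ * x + c₀) ∧
    (∃ x : ℝ, a * x ^ 3 + c₂ * x ^ 2 + c₁ * x + c₀ < 0) := by
  rcases ha.lt_or_gt with hneg | hpos
  · obtain ⟨x, hx⟩ := exists_pos_cubic (neg_pos.2 hneg) c₂ (-c₁) c₀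
    obtain ⟨y, hy⟩ := exists_pos_cubic (neg_pos.2 hneg) (-c₂) (-c₁) (-c₀)
    exact ⟨⟨-x, by linarith⟩, ⟨y, by linarith⟩⟩
  · obtain ⟨y, hy⟩ := exists_pos_cubic hpos (-c₂) c₁ (-c₀)
    exact ⟨exists_pos_cubic hpos c₂ c₁ c₀, ⟨-y, by linarith⟩⟩

section TwoPoint

variable {b : ℝ} (hb : b ≠ 1)
include hb

theorem two_point_mean_eq_one (x : ℝ) : b * x + (1 - b) * ((1 - b * x) / (1 - b)) = 1 := by
  have : 1 - b ≠ 0 := sub_ne_zero.2 hb.symm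
  field_simp
  ring

theorem exists_two_point_moment_eq_cubic :
    ∃ c₂ c₁ c₀ : ℝ, ∀ x : ℝ, b * (4 * x ^ 3 + 6 * x ^ 2) +
        (1 - b) * (4 * ((1 - b * x) / (1 - b)) ^ 3 + 6 * ((1 - b * x) / (1 - b)) ^ 2) =
      4 * b * (1 - 2 * b) / (1 - b) ^ 2 * x ^ 3 + c₂ * x ^ 2 + c₁ * x + c₀ := by
  have : 1 - b ≠ 0 := sub_ne_zero.2 hb.symm
  refine ⟨6 * b + 12 * b ^ 2 / (1 - b) ^ 2 + 6 * b ^ 2 / (1 - b),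
    -12 * b / (1 - b) ^ 2 - 12 * b / (1 - b), 4 / (1 - b) ^ 2 + 6 / (1 - b), fun x => ?_⟩
  field_simp
  ring

end TwoPoint

theorem stmt_5 (b : ℝ) (hb : b ∈ Set.Ioo (0:ℝ) 1) (hb2 : b ≠ 1/2) :
    (∀ x : ℝ, b * x + (1 - b) * ((1 - b*x)/(1 - b)) = 1) ∧
    (∃ c₂ c₁ c₀ : ℝ, ∀ x : ℝ,
      b * (4*x^3 + 6*x^2) + (1 - b) * (4*((1 - b*x)/(1 - b))^3 + 6*((1 - b*x)/(1 - b))^2)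
        = (4*b*(1 - 2*b)/(1 - b)^2) * x^3 + c₂*x^2 + c₁*x + c₀) ∧
    (∃ x : ℝ, 0 < b * (4*x^3 + 6*x^2) + (1 - b) * (4*((1 - b*x)/(1 - b))^3 + 6*((1 - b*x)/(1 - b))^2) + 4) ∧
    (∃ x : ℝ, b * (4*x^3 + 6*x^2) + (1 - b) * (4*((1 - b*x)/(1 - b))^3 + 6*((1 - b*x)/(1 - b))^2) + 4 < 0) := by
  obtain ⟨hb0, hb1⟩ := hb
  have hlead : 4 * b * (1 - 2 * b) / (1 - b) ^ 2 ≠ 0 := by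
    have : 1 - 2 * b ≠ 0 := fun h => hb2 (by linarith)
    have : 1 - b ≠ 0 := by linarith
    positivity
  obtain ⟨c₂, c₁, c₀, hcubic⟩ := exists_two_point_moment_eq_cubic hb1.ne
  obtain ⟨⟨x, hx⟩, ⟨y, hy⟩⟩ := cubic_takes_both_signs hlead c₂ c₁ (c₀ + 4)
  refine ⟨two_point_mean_eq_one hb1.ne, ⟨c₂, c₁, c₀, hcubic⟩, ⟨x, ?_⟩, ⟨y, ?_⟩⟩
  · rw [hcubic]; linarith
  · rw [hcubic]; linarith
end

section
/- Conversely, suppose ψ : ℝ^d → ℝ^d is continuous and for every T > 0, every probability measure m₀, and all σ₁, σ₂ ∈ ℝ^d one has ∫ (ψ(x − Tσ₁) − ψ(x − Tσ₂))·(σ₁ − σ₂) dm₀(x) ≤ |σ₁ − σ₂|². Then ψ is a monotone vector field: (ψ(σ₁) − ψ(σ₂))·(σ₁ − σ₂) ≥ 0 for all σ₁, σ₂ ∈ ℝ^d. -/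
open MeasureTheory Filter Topology

section InnerProductSpace

variable {E : Type*} [NormedAddCommGroup E] [InnerProductSpace ℝ E]

theorem inner_nonneg_of_forall_pos_inner_neg_smul_le (a v : E)
    (h : ∀ t : ℝ, 0 < t → inner ℝ a (-(t • v)) ≤ ‖t • v‖ ^ 2) : 0 ≤ inner ℝ a v := by
  have hbound : ∀ t : ℝ, 0 < t → -inner ℝ a v ≤ t * ‖v‖ ^ 2 := fun t ht => by
    have := h t ht
    rw [inner_neg_right, real_inner_smul_right, norm_smul, mul_pow, Real.norm_of_nonneg ht.le]
      at this
    nlinarith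
  have hlim : Tendsto (fun t : ℝ => t * ‖v‖ ^ 2) (𝓝[>] 0) (𝓝 0) := by
    simpa using tendsto_nhdsWithin_of_tendsto_nhds ((tendsto_id (x := 𝓝 (0 : ℝ))).mul_const _)
  have := ge_of_tendsto hlim (eventually_nhdsWithin_of_forall hbound)
  linarith

end InnerProductSpace

theorem stmt_11_general (d : ℕ) (ψ : EuclideanSpace ℝ (Fin d) → EuclideanSpace ℝ (Fin d))
    (hyp : ∀ T : ℝ, 0 < T → ∀ m₀ : Measure (EuclideanSpace ℝ (Fin d)),
      IsProbabilityMeasure m₀ → ∀ σ₁ σ₂ : EuclideanSpace ℝ (Fin d),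
      (∫ x, (inner ℝ (ψ (x - T • σ₁) - ψ (x - T • σ₂)) (σ₁ - σ₂) : ℝ) ∂m₀) ≤ ‖σ₁ - σ₂‖^2) :
    ∀ σ₁ σ₂ : EuclideanSpace ℝ (Fin d), (0:ℝ) ≤ inner ℝ (ψ σ₁ - ψ σ₂) (σ₁ - σ₂) := by
  intro σ₁ σ₂
  refine inner_nonneg_of_forall_pos_inner_neg_smul_le _ _ fun t ht => ?_
  -- Testing at the Dirac mass at the origin with σᵢ ↦ -t σᵢ and T = t⁻¹ recovers ψ σᵢ.
  have h := hyp t⁻¹ (inv_pos.mpr ht) (Measure.dirac 0) inferInstance (-(t • σ₁)) (-(t • σ₂))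
  have recover : ∀ σ : EuclideanSpace ℝ (Fin d), 0 - t⁻¹ • -(t • σ) = σ := fun σ => by
    rw [smul_neg, inv_smul_smul₀ ht.ne', zero_sub, neg_neg]
  rwa [integral_dirac, recover, recover, neg_sub_neg, ← smul_sub, ← neg_sub σ₁, smul_neg,
    norm_neg] at h

theorem stmt_11 (d : ℕ) (ψ : EuclideanSpace ℝ (Fin d) → EuclideanSpace ℝ (Fin d))
    (hcont : Continuous ψ)
    (hyp : ∀ T : ℝ, 0 < T → ∀ m₀ : Measure (EuclideanSpace ℝ (Fin d)),
      IsProbabilityMeasure m₀ → ∀ σ₁ σ₂ : EuclideanSpace ℝ (Fin d),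
      (∫ x, (inner ℝ (ψ (x - T • σ₁) - ψ (x - T • σ₂)) (σ₁ - σ₂) : ℝ) ∂m₀) ≤ ‖σ₁ - σ₂‖^2) :
    ∀ σ₁ σ₂ : EuclideanSpace ℝ (Fin d), (0:ℝ) ≤ inner ℝ (ψ σ₁ - ψ σ₂) (σ₁ - σ₂) :=
  stmt_11_general d ψ hyp
end

section
/- Let F : ℝ^d → ℝ^d be continuous, monotone (i.e. (F(a₁) − F(a₂))·(a₁ − a₂) ≥ 0 for all a₁, a₂), and coercive in the sense that F(a)·a/|a| → ∞ as |a| → ∞. Then there exists a ∈ ℝ^d with F(a) = 0. -/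
/-!
The regularized maps `F + ε • id` are continuous and strongly monotone, and such maps have a zero
by induction on the dimension: for a unit vector `e`, the projection of `F` to each hyperplane
`t • e + eᗮ` is strongly monotone, so it has a zero `u t`; strong monotonicity makes `t ↦ u t`
continuous and `ψ t = ⟪F (u t + t • e), e⟫` grow at least linearly in both directions, so the
intermediate value theorem gives `t` with `ψ t = 0`, i.e. `F (u t + t • e) = 0`. A zero `x` of
`F + ε • id` satisfies `⟪F x, x⟫ = -ε ‖x‖² ≤ 0`, so coercivity confines it to a fixed ball, and
`‖F x‖ = ε ‖x‖ → 0`; the image of that ball under `F` is compact, hence contains `0`.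
-/

open Filter Topology Set RealInnerProductSpace Submodule Module

section RealLine

variable {ψ : ℝ → ℝ} {c : ℝ}

theorem monotone_of_mul_sq_le (hc : 0 ≤ c) (h : ∀ s t, c * (s - t) ^ 2 ≤ (ψ s - ψ t) * (s - t)) :
    Monotone ψ := by
  intro s t hst
  rcases hst.eq_or_lt with rfl | hlt
  · rfl
  · nlinarith [h t s, mul_nonneg hc (sq_nonneg (t - s))]

theorem surjective_of_mul_sq_le (hc : 0 < c) (hψ : Continuous ψ)
    (h : ∀ s t, c * (s - t) ^ 2 ≤ (ψ s - ψ t) * (s - t)) : Function.Surjective ψ := by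
  have hgrowth (t : ℝ) : 0 ≤ (ψ t - (ψ 0 + c * t)) * t := by nlinarith [h t 0]
  refine hψ.surjective ?_ ?_
  · refine tendsto_atTop_mono' _ ?_
      (tendsto_atTop_add_const_left _ (ψ 0) (tendsto_id.const_mul_atTop hc))
    filter_upwards [eventually_gt_atTop 0] with t ht
    exact sub_nonneg.1 (nonneg_of_mul_nonneg_left (hgrowth t) ht)
  · refine tendsto_atBot_mono' _ ?_
      (tendsto_atBot_add_const_left _ (ψ 0) (tendsto_id.const_mul_atBot hc))
    filter_upwards [eventually_lt_atBot 0] with t ht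
    exact sub_nonpos.1 (nonpos_of_mul_nonneg_left (hgrowth t) ht)

theorem continuous_of_mul_sq_dist_le {X : Type*} [PseudoMetricSpace X] {f : ℝ → X}
    (hc : 0 < c) (hψ : Monotone ψ) (h : ∀ s t, c * dist (f s) (f t) ^ 2 ≤ (ψ s - ψ t) * (s - t)) :
    Continuous f := by
  refine continuous_iff_continuousAt.2 fun t₀ => tendsto_iff_dist_tendsto_zero.2 ?_
  set M := ψ (t₀ + 1) - ψ (t₀ - 1)
  have hbound : ∀ t ∈ Icc (t₀ - 1) (t₀ + 1), dist (f t) (f t₀) ≤ √(M * |t - t₀| / c) := by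
    intro t ht
    have hM : |ψ t - ψ t₀| ≤ M := abs_sub_le_iff.2
      ⟨by linarith [hψ ht.2, hψ (by linarith : t₀ - 1 ≤ t₀)],
       by linarith [hψ ht.1, hψ (by linarith : t₀ ≤ t₀ + 1)]⟩
    refine Real.le_sqrt_of_sq_le ((le_div_iff₀ hc).2 ?_)
    calc dist (f t) (f t₀) ^ 2 * c ≤ (ψ t - ψ t₀) * (t - t₀) := by linarith [h t t₀]
      _ ≤ |ψ t - ψ t₀| * |t - t₀| := by rw [← abs_mul]; exact le_abs_self _
      _ ≤ M * |t - t₀| := by gcongr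
  have hlim : Tendsto (fun t => √(M * |t - t₀| / c)) (𝓝 t₀) (𝓝 0) := by
    have hcont : Continuous (fun t => √(M * |t - t₀| / c)) := by fun_prop
    simpa using hcont.tendsto t₀
  exact squeeze_zero' (Eventually.of_forall fun _ => dist_nonneg)
    (mem_of_superset (Icc_mem_nhds (by linarith) (by linarith)) hbound) hlim

end RealLine

section StronglyMonotone

variable {E : Type*} [NormedAddCommGroup E] [InnerProductSpace ℝ E]

def IsStronglyMonotone (c : ℝ) (F : E → E) : Prop :=
  ∀ a b, c * ‖a - b‖ ^ 2 ≤ ⟪F a - F b, a - b⟫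

theorem isStronglyMonotone_add_smul {F : E → E} (hmono : ∀ a b, 0 ≤ ⟪F a - F b, a - b⟫)
    (ε : ℝ) : IsStronglyMonotone ε (fun x => F x + ε • x) := by
  intro a b
  have hsplit : F a + ε • a - (F b + ε • b) = (F a - F b) + ε • (a - b) := by module
  rw [hsplit, inner_add_left, real_inner_smul_left, real_inner_self_eq_norm_sq]
  linarith [hmono a b]

noncomputable def sliceMap (F : E → E) (e : E) (t : ℝ) (u : (ℝ ∙ e)ᗮ) : (ℝ ∙ e)ᗮ :=
  (ℝ ∙ e)ᗮ.orthogonalProjectionOnto (F (u + t • e))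

variable {F : E → E} {e : E} {c : ℝ}

theorem continuous_sliceMap (hF : Continuous F) (t : ℝ) : Continuous (sliceMap F e t) :=
  (orthogonalProjectionOnto _).continuous.comp
    (hF.comp (continuous_subtype_val.add continuous_const))

theorem IsStronglyMonotone.sliceMap (hmono : IsStronglyMonotone c F) (t : ℝ) :
    IsStronglyMonotone c (_root_.sliceMap F e t) := by
  intro u v
  have hsub : ((u - v : (ℝ ∙ e)ᗮ) : E) = (u + t • e) - (v + t • e) := by
    push_cast
    abel
  calc c * ‖u - v‖ ^ 2 = c * ‖(u + t • e) - (v + t • e)‖ ^ 2 := by rw [← hsub, coe_norm]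
    _ ≤ ⟪F (u + t • e) - F (v + t • e), (u + t • e) - (v + t • e)⟫ := hmono _ _
    _ = ⟪_root_.sliceMap F e t u - _root_.sliceMap F e t v, u - v⟫ := by
      rw [_root_.sliceMap, _root_.sliceMap, ← map_sub,
        inner_orthogonalProjectionOnto_eq_of_mem_right, hsub]

theorem mul_sq_add_sq_le_of_sliceMap_eq_zero (he : ‖e‖ = 1) (hmono : IsStronglyMonotone c F)
    {u : ℝ → (ℝ ∙ e)ᗮ} (hu : ∀ t, sliceMap F e t (u t) = 0) (s t : ℝ) :
    c * (‖u s - u t‖ ^ 2 + (s - t) ^ 2) ≤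
      (⟪F (u s + s • e), e⟫ - ⟪F (u t + t • e), e⟫) * (s - t) := by
  set w : (ℝ ∙ e)ᗮ := u s - u t
  have hw : ⟪(w : E), e⟫ = 0 := mem_orthogonal_singleton_iff_inner_left.1 w.2
  have hdiff : (u s + s • e) - (u t + t • e) = (w : E) + (s - t) • e := by
    simp only [w, AddSubgroupClass.coe_sub]
    module
  have hnorm : ‖(u s + s • e) - (u t + t • e)‖ ^ 2 = ‖w‖ ^ 2 + (s - t) ^ 2 := by
    rw [hdiff, norm_add_sq_real, real_inner_smul_right, hw, norm_smul, he, coe_norm,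
      Real.norm_eq_abs, mul_one, sq_abs]
    ring
  have hperp : ⟪F (u s + s • e) - F (u t + t • e), (w : E)⟫ = 0 := by
    have hs := hu s
    have ht := hu t
    rw [sliceMap] at hs ht
    rw [← inner_orthogonalProjectionOnto_eq_of_mem_right, map_sub, hs, ht, sub_zero,
      inner_zero_left]
  have h := hmono (u s + s • e) (u t + t • e)
  rwa [hnorm, hdiff, inner_add_right, hperp, real_inner_smul_right, inner_sub_left, zero_add,
    mul_comm (s - t)] at h

theorem eq_zero_of_orthogonalProjectionOnto_eq_zero_of_inner_eq_zero {v : E}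
    (hproj : (ℝ ∙ e)ᗮ.orthogonalProjectionOnto v = 0) (hinner : ⟪v, e⟫ = 0) : v = 0 := by
  rw [orthogonalProjectionOnto_eq_zero_iff, orthogonal_orthogonal] at hproj
  have hperp : v ∈ (ℝ ∙ e)ᗮ := mem_orthogonal_singleton_iff_inner_left.2 hinner
  have hmem : v ∈ (ℝ ∙ e) ⊓ (ℝ ∙ e)ᗮ := ⟨hproj, hperp⟩
  rwa [inf_orthogonal_eq_bot, Submodule.mem_bot] at hmem

theorem exists_eq_zero_of_forall_exists_sliceMap_eq_zero (he : ‖e‖ = 1) (hc : 0 < c)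
    (hF : Continuous F) (hmono : IsStronglyMonotone c F)
    (hslice : ∀ t, ∃ u, sliceMap F e t u = 0) : ∃ x, F x = 0 := by
  choose u hu using hslice
  set ψ : ℝ → ℝ := fun t => ⟪F (u t + t • e), e⟫
  have hkey := mul_sq_add_sq_le_of_sliceMap_eq_zero he hmono hu
  have hψ_growth (s t : ℝ) : c * (s - t) ^ 2 ≤ (ψ s - ψ t) * (s - t) := by
    nlinarith [hkey s t, sq_nonneg ‖u s - u t‖]
  have hu_cont : Continuous u := by
    refine continuous_of_mul_sq_dist_le hc (monotone_of_mul_sq_le hc.le hψ_growth) fun s t => ?_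
    rw [dist_eq_norm]
    nlinarith [hkey s t, sq_nonneg (s - t)]
  have hψ_cont : Continuous ψ := by fun_prop
  obtain ⟨t, ht⟩ := surjective_of_mul_sq_le hc hψ_cont hψ_growth 0
  exact ⟨u t + t • e, eq_zero_of_orthogonalProjectionOnto_eq_zero_of_inner_eq_zero (hu t) ht⟩

theorem IsStronglyMonotone.exists_eq_zero [FiniteDimensional ℝ E]
    (hmono : IsStronglyMonotone c F) (hc : 0 < c) (hF : Continuous F) : ∃ x, F x = 0 := by
  induction hn : finrank ℝ E generalizing E with
  | zero =>
    have : Subsingleton E := finrank_zero_iff.mp hn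
    exact ⟨0, Subsingleton.elim _ _⟩
  | succ n ih =>
    have : Nontrivial E := finrank_pos_iff (R := ℝ) |>.mp (by omega)
    have : Fact (finrank ℝ E = n + 1) := ⟨hn⟩
    obtain ⟨e, he⟩ := exists_norm_eq E zero_le_one
    have he0 : e ≠ 0 := norm_ne_zero_iff.1 (by simp [he])
    exact exists_eq_zero_of_forall_exists_sliceMap_eq_zero he hc hF hmono fun t =>
      ih (hmono.sliceMap t) (continuous_sliceMap hF t) (finrank_orthogonal_span_singleton he0)

end StronglyMonotone

section Coercive

variable {E : Type*} [NormedAddCommGroup E] [InnerProductSpace ℝ E] {F : E → E}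

theorem exists_forall_norm_le_of_inner_nonpos
    (hcoercive : Tendsto (fun a => ⟪F a, a⟫ / ‖a‖) (cocompact E) atTop) :
    ∃ R, ∀ a, ⟪F a, a⟫ ≤ 0 → ‖a‖ ≤ R := by
  obtain ⟨K, hK, hpos⟩ := hasBasis_cocompact.eventually_iff.1
    (hcoercive.eventually (eventually_gt_atTop 0))
  obtain ⟨R, hR⟩ := hK.isBounded.subset_closedBall 0
  refine ⟨R, fun a ha => mem_closedBall_zero_iff.1 (hR ?_)⟩
  by_contra haK
  exact (hpos haK).not_ge (div_nonpos_of_nonpos_of_nonneg ha (norm_nonneg a))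

theorem exists_eq_zero_of_monotone_of_tendsto_inner_div_norm [FiniteDimensional ℝ E]
    (hcont : Continuous F) (hmono : ∀ a b, 0 ≤ ⟪F a - F b, a - b⟫)
    (hcoercive : Tendsto (fun a => ⟪F a, a⟫ / ‖a‖) (cocompact E) atTop) :
    ∃ a, F a = 0 := by
  obtain ⟨R, hR⟩ := exists_forall_norm_le_of_inner_nonpos hcoercive
  have happrox (n : ℕ) : ∃ x, ‖x‖ ≤ R ∧ ‖F x‖ ≤ 1 / ((n : ℝ) + 1) * R := by
    set ε : ℝ := 1 / ((n : ℝ) + 1)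
    have hε : 0 < ε := by positivity
    obtain ⟨x, hx⟩ := (isStronglyMonotone_add_smul hmono ε).exists_eq_zero hε (by fun_prop)
    have hFx : F x = -(ε • x) := eq_neg_of_add_eq_zero_left hx
    have hxR : ‖x‖ ≤ R := hR x <| by
      rw [hFx, inner_neg_left, real_inner_smul_left, real_inner_self_eq_norm_sq, neg_nonpos]
      positivity
    refine ⟨x, hxR, ?_⟩
    rw [hFx, norm_neg, norm_smul, Real.norm_of_nonneg hε.le]
    gcongr
  choose x hxR hFx using happrox
  have hlim : Tendsto (fun n => F (x n)) atTop (𝓝 0) :=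
    squeeze_zero_norm hFx (by simpa using tendsto_one_div_add_atTop_nhds_zero_nat.mul_const R)
  obtain ⟨a, -, ha⟩ := ((isCompact_closedBall 0 R).image hcont).isClosed.mem_of_tendsto hlim
    (Eventually.of_forall fun n => ⟨x n, mem_closedBall_zero_iff.2 (hxR n), rfl⟩)
  exact ⟨a, ha⟩

end Coercive

theorem stmt_17 (d : ℕ) (F : EuclideanSpace ℝ (Fin d) → EuclideanSpace ℝ (Fin d))
    (hcont : Continuous F)
    (hmono : ∀ a₁ a₂, (0:ℝ) ≤ inner ℝ (F a₁ - F a₂) (a₁ - a₂))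
    (hcoercive : Tendsto (fun a : EuclideanSpace ℝ (Fin d) => (inner ℝ (F a) a : ℝ) / ‖a‖)
      (cocompact _) atTop) :
    ∃ a, F a = 0 :=
  exists_eq_zero_of_monotone_of_tendsto_inner_div_norm hcont hmono hcoercive
end

section
/- Let φ : ℝ → ℝ be a nonnegative differentiable function satisfying φ(σ) ≥ −2σ·φ'(σ) for all σ ≥ 0. Then for every probability measure m on ℝ with finite second moment and every v ∈ L²(m): φ(½∫x² dm)·∫v² dm + φ'(½∫x² dm)·(∫x·v(x) dm)² ≥ 0. -/
open MeasureTheory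

theorem stmt_19 (φ : ℝ → ℝ) (hdiff : Differentiable ℝ φ) (hpos : ∀ σ, 0 ≤ φ σ)
    (hineq : ∀ σ : ℝ, 0 ≤ σ → -2*σ*(deriv φ σ) ≤ φ σ)
    (m : Measure ℝ) [IsProbabilityMeasure m]
    (hx2 : Integrable (fun x => x^2) m)
    (v : ℝ → ℝ) (hv : AEStronglyMeasurable v m)
    (hv2 : Integrable (fun x => (v x)^2) m)
    (hxv : Integrable (fun x => x * v x) m) :
    0 ≤ φ ((1/2) * ∫ x, x^2 ∂m) * (∫ x, (v x)^2 ∂m) +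
        deriv φ ((1/2) * ∫ x, x^2 ∂m) * (∫ x, x * v x ∂m)^2 := by
  set A := ∫ x, x^2 ∂m with hA
  set B := ∫ x, x * v x ∂m with hB
  set C := ∫ x, (v x)^2 ∂m with hC
  have hA0 : 0 ≤ A := integral_nonneg fun x => sq_nonneg x
  have hC0 : 0 ≤ C := integral_nonneg fun x => sq_nonneg (v x)
  -- Cauchy-Schwarz: B^2 ≤ A * C
  have hCS : B^2 ≤ A * C := by
    have key : ∀ t : ℝ, 0 ≤ A * (t * t) + (2*B) * t + C := by
      intro t
      have hint : ∀ x, (t * x + v x)^2 = t*t*(x^2) + (2*t)*(x*v x) + (v x)^2 := by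
        intro x; ring
      have hf : Integrable (fun x => t*t*(x^2) + (2*t)*(x*v x)) m :=
        (hx2.const_mul _).add (hxv.const_mul _)
      have h2 : 0 ≤ ∫ x, (t * x + v x)^2 ∂m := integral_nonneg fun x => sq_nonneg _
      calc (0:ℝ) ≤ ∫ x, (t * x + v x)^2 ∂m := h2
        _ = ∫ x, (t*t*(x^2) + (2*t)*(x*v x) + (v x)^2) ∂m := by
            congr 1; funext x; exact hint x
        _ = t*t*A + (2*t)*B + C := by
            rw [integral_add hf hv2,
              integral_add (hx2.const_mul _) (hxv.const_mul _),
              integral_const_mul, integral_const_mul]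
        _ = A * (t * t) + (2*B) * t + C := by ring
    have hd := discrim_le_zero key
    rw [discrim] at hd
    nlinarith
  have h2 := hineq ((1/2)*A) (by positivity)
  set D := deriv φ ((1/2)*A) with hD
  set P := φ ((1/2)*A) with hP
  have hP0 : 0 ≤ P := hpos _
  rcases le_or_gt 0 D with h | h
  · positivity
  · have h1 : D * B^2 ≥ D * (A * C) := mul_le_mul_of_nonpos_left hCS h.le
    have h3 : 0 ≤ (P + A*D) * C := mul_nonneg (by nlinarith) hC0
    nlinarith [h1, h3]
end
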